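/- arXiv:1810.08709 — 6 statements merged into one kernel-verified Lean document; each statement's English description precedes it below -/
import Mathlib

section
/- Wirtinger's inequality: let n, k ≥ 1 and let e₁, …, e_{2k} be vectors in ℂⁿ that are orthonormal for the real inner product. Then the 2k × 2k real matrix A with entries A_{jl} = ω(e_j, e_l) satisfies det A ≤ 1, and det A = 1 if and only if the real span of e₁, …, e_{2k} is closed under multiplication by i (i.e. it is a complex k-dimensional subspace of ℂⁿ). (The quantity det A is the square of the value of the calibration ω^k/k! on the 2k-tuple.) -/
open Complex Finset

/-- The real inner product on `ℂⁿ`: `⟪u,v⟫ = Re Σⱼ uⱼ · conj(vⱼ)`. -/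
noncomputable def rinner {n : ℕ} (u v : EuclideanSpace ℂ (Fin n)) : ℝ :=
  (∑ j, u j * starRingEnd ℂ (v j)).re

/-- The standard Kähler 2-form on `ℂⁿ`: `ω(u,v) = ⟪i•u, v⟫`. -/
noncomputable def kahlerForm {n : ℕ} (u v : EuclideanSpace ℂ (Fin n)) : ℝ :=
  rinner (Complex.I • u) v

/-!
Let `J` be multiplication by `i`, a real isometry with `J² = -1`, and `V` the real span of the
`eⱼ`. The matrix `A` is the transpose of the matrix of the compression `P_V ∘ J` of `J` to `V` in
the orthonormal basis `e`. By Bessel's inequality this compression is a contraction, so the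
eigenvalues of `A Aᵀ` lie in `[0, 1]` and `(det A)² = det (A Aᵀ) ≤ 1`. If `det A = 1`, all these
eigenvalues are `1`, so `A Aᵀ = 1`: each `J eⱼ` keeps its full norm after projecting to `V`, hence
lies in `V`. Conversely, if `J V ⊆ V` then `A² = -1`, and then `det A = 1`, because
`(1 + A)² = 2 A` makes `det A` nonnegative while `(det A)² = det (-1) = ±1`.
-/

open Set Submodule
open scoped InnerProductSpace

theorem Finset.eq_one_of_prod_eq_one_of_le_one {ι R : Type*} [Fintype ι] [CommSemiring R]
    [PartialOrder R] [IsOrderedRing R] {f : ι → R} (h0 : ∀ i, 0 ≤ f i) (h1 : ∀ i, f i ≤ 1)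
    (h : ∏ i, f i = 1) (i : ι) : f i = 1 := by
  classical
  refine le_antisymm (h1 i) ?_
  calc 1 = f i * ∏ j ∈ univ.erase i, f j := by rw [mul_prod_erase _ _ (mem_univ i), h]
    _ ≤ f i := mul_le_of_le_one_right (h0 i) (prod_le_one (fun j _ => h0 j) fun j _ => h1 j)

namespace Matrix

variable {ι : Type*} [Fintype ι] {A : Matrix ι ι ℝ}

theorem isHermitian_transpose_mul_self (A : Matrix ι ι ℝ) : (Aᵀ * A).IsHermitian := by
  simpa using isHermitian_conjTranspose_mul_self A

variable [DecidableEq ι]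

theorem eigenvalues_transpose_mul_self_mem_Icc (hA : ∀ x, A *ᵥ x ⬝ᵥ A *ᵥ x ≤ x ⬝ᵥ x) (i : ι) :
    (isHermitian_transpose_mul_self A).eigenvalues i ∈ Set.Icc 0 1 := by
  set v := ((isHermitian_transpose_mul_self A).eigenvectorBasis i).ofLp
  have hv : v ⬝ᵥ v = 1 := by
    have h := real_inner_self_eq_norm_sq ((isHermitian_transpose_mul_self A).eigenvectorBasis i)
    rw [(isHermitian_transpose_mul_self A).eigenvectorBasis.orthonormal.1 i, one_pow,
      EuclideanSpace.inner_eq_star_dotProduct] at h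
    simpa [v] using h
  have heig : (isHermitian_transpose_mul_self A).eigenvalues i = A *ᵥ v ⬝ᵥ A *ᵥ v := by
    rw [IsHermitian.eigenvalues_eq, ← mulVec_mulVec, dotProduct_mulVec, vecMul_transpose]
    simp [v]
  rw [heig]
  exact ⟨dotProduct_self_star_nonneg _, hv ▸ hA v⟩

theorem det_sq_eq_prod_eigenvalues (A : Matrix ι ι ℝ) :
    A.det ^ 2 = ∏ i, (isHermitian_transpose_mul_self A).eigenvalues i := by
  simpa [sq] using (isHermitian_transpose_mul_self A).det_eq_prod_eigenvalues

theorem det_sq_le_one_of_contracting (hA : ∀ x, A *ᵥ x ⬝ᵥ A *ᵥ x ≤ x ⬝ᵥ x) : A.det ^ 2 ≤ 1 := by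
  rw [det_sq_eq_prod_eigenvalues]
  exact prod_le_one (fun i _ => (eigenvalues_transpose_mul_self_mem_Icc hA i).1)
    fun i _ => (eigenvalues_transpose_mul_self_mem_Icc hA i).2

theorem transpose_mul_self_eq_one_of_det_sq_eq_one (hA : ∀ x, A *ᵥ x ⬝ᵥ A *ᵥ x ≤ x ⬝ᵥ x)
    (hdet : A.det ^ 2 = 1) : Aᵀ * A = 1 := by
  have hH := isHermitian_transpose_mul_self A
  have hone : hH.eigenvalues = 1 := funext <| Finset.eq_one_of_prod_eq_one_of_le_one
    (fun i => (eigenvalues_transpose_mul_self_mem_Icc hA i).1)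
    (fun i => (eigenvalues_transpose_mul_self_mem_Icc hA i).2) (det_sq_eq_prod_eigenvalues A ▸ hdet)
  rw [hH.spectral_theorem, hone]
  simp

theorem det_eq_one_of_mul_self_eq_neg_one {R : Type*} [CommRing R] [LinearOrder R]
    [IsStrictOrderedRing R] {M : Matrix ι ι R} (hM : M * M = -1) : M.det = 1 := by
  have hsq : M.det ^ 2 = (-1) ^ Fintype.card ι := by
    rw [sq, ← det_mul, hM, det_neg, det_one, mul_one]
  -- `(1 + M)² = 2 M`, so `det M` is a square up to the positive factor `2 ^ card ι`.
  have hnonneg : 0 ≤ M.det := by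
    have h : (1 + M) * (1 + M) = (2 : R) • M := by
      simp only [add_mul, mul_add, one_mul, mul_one, hM, two_smul]; abel
    have h2 := congrArg det h
    rw [det_mul, det_smul] at h2
    exact nonneg_of_mul_nonneg_right (h2 ▸ mul_self_nonneg _) (by positivity)
  rcases neg_one_pow_eq_or R (Fintype.card ι) with h | h
  · rw [h] at hsq
    exact (pow_eq_one_iff_of_nonneg hnonneg two_ne_zero).mp hsq
  · rw [h] at hsq
    nlinarith [sq_nonneg M.det]

end Matrix

section Orthonormal

variable {E : Type*} [NormedAddCommGroup E] [InnerProductSpace ℝ E] {ι : Type*} [Fintype ι]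
  {e : ι → E}

theorem Orthonormal.norm_sum_smul_sq (he : Orthonormal ℝ e) (c : ι → ℝ) :
    ‖∑ i, c i • e i‖ ^ 2 = c ⬝ᵥ c := by
  rw [← real_inner_self_eq_norm_sq, he.inner_sum]
  simp [dotProduct]

theorem Orthonormal.sum_inner_smul_eq_of_mem_span (he : Orthonormal ℝ e) {x : E}
    (hx : x ∈ span ℝ (range e)) : ∑ i, ⟪e i, x⟫_ℝ • e i = x := by
  obtain ⟨c, rfl⟩ := (mem_span_range_iff_exists_fun ℝ).mp hx
  simp_rw [he.inner_right_fintype]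

theorem Orthonormal.mem_span_of_sum_inner_sq_eq (he : Orthonormal ℝ e) {x : E}
    (h : ∑ i, ⟪e i, x⟫_ℝ ^ 2 = ‖x‖ ^ 2) : x ∈ span ℝ (range e) := by
  set y := ∑ i, ⟪e i, x⟫_ℝ • e i
  have hxy : ⟪x, y⟫_ℝ = ∑ i, ⟪e i, x⟫_ℝ ^ 2 := by
    simp [y, inner_sum, inner_smul_right, real_inner_comm, sq]
  have hy : ‖y‖ ^ 2 = ∑ i, ⟪e i, x⟫_ℝ ^ 2 := by
    simp [y, he.norm_sum_smul_sq, dotProduct, sq]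
  have hdist : ‖x - y‖ ^ 2 = 0 := by
    rw [norm_sub_sq_real, hxy, hy, h]; ring
  rw [sq_eq_zero_iff, norm_eq_zero, sub_eq_zero] at hdist
  rw [hdist]
  exact sum_mem fun i _ => smul_mem _ _ (subset_span (mem_range_self i))

end Orthonormal

section InnerMatrix

open Matrix

variable {E : Type*} [NormedAddCommGroup E] [InnerProductSpace ℝ E] {ι : Type*} [Fintype ι]
  (J : E →ₗᵢ[ℝ] E) {e : ι → E}

def LinearIsometry.innerMatrix (e : ι → E) : Matrix ι ι ℝ :=
  Matrix.of fun j l => ⟪J (e j), e l⟫_ℝ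

namespace LinearIsometry

theorem innerMatrix_transpose_mulVec (c : ι → ℝ) :
    (J.innerMatrix e)ᵀ *ᵥ c = fun l => ⟪e l, J (∑ j, c j • e j)⟫_ℝ := by
  ext l
  simp [innerMatrix, mulVec, dotProduct, inner_sum, inner_smul_right, real_inner_comm,
    mul_comm]

theorem dotProduct_innerMatrix_transpose_mulVec_le (he : Orthonormal ℝ e) (c : ι → ℝ) :
    (J.innerMatrix e)ᵀ *ᵥ c ⬝ᵥ (J.innerMatrix e)ᵀ *ᵥ c ≤ c ⬝ᵥ c := by
  calc (J.innerMatrix e)ᵀ *ᵥ c ⬝ᵥ (J.innerMatrix e)ᵀ *ᵥ c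
      = ∑ l, ⟪e l, J (∑ j, c j • e j)⟫_ℝ ^ 2 := by
        simp only [innerMatrix_transpose_mulVec, dotProduct, sq]
    _ ≤ ‖J (∑ j, c j • e j)‖ ^ 2 := by
        simpa only [Real.norm_eq_abs, sq_abs] using he.sum_inner_products_le _ (s := univ)
    _ = c ⬝ᵥ c := by rw [J.norm_map, he.norm_sum_smul_sq]

variable [DecidableEq ι]

theorem det_innerMatrix_le_one (he : Orthonormal ℝ e) : (J.innerMatrix e).det ≤ 1 := by
  have h := det_sq_le_one_of_contracting (J.dotProduct_innerMatrix_transpose_mulVec_le he)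
  rw [det_transpose] at h
  nlinarith

theorem apply_mem_span_of_det_innerMatrix_eq_one (he : Orthonormal ℝ e)
    (hdet : (J.innerMatrix e).det = 1) (j : ι) : J (e j) ∈ span ℝ (range e) := by
  have hrows := transpose_mul_self_eq_one_of_det_sq_eq_one
    (J.dotProduct_innerMatrix_transpose_mulVec_le he) (by rw [det_transpose, hdet, one_pow])
  refine he.mem_span_of_sum_inner_sq_eq ?_
  have hjj := congrFun (congrFun hrows j) j
  rw [J.norm_map, he.norm_eq_one j]
  simpa [mul_apply, innerMatrix, real_inner_comm, sq] using hjj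

theorem innerMatrix_mul_self_eq_neg_one (he : Orthonormal ℝ e) (hJ : ∀ x, J (J x) = -x)
    (hspan : ∀ j, J (e j) ∈ span ℝ (range e)) : J.innerMatrix e * J.innerMatrix e = -1 := by
  ext j p
  calc (J.innerMatrix e * J.innerMatrix e) j p
      = ⟪J (∑ l, ⟪e l, J (e j)⟫_ℝ • e l), e p⟫_ℝ := by
        simp [innerMatrix, mul_apply, sum_inner, inner_smul_left, real_inner_comm]
    _ = ⟪J (J (e j)), e p⟫_ℝ := by rw [he.sum_inner_smul_eq_of_mem_span (hspan j)]
    _ = (-1 : Matrix ι ι ℝ) j p := by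
        rw [hJ, inner_neg_left, orthonormal_iff_ite.mp he]
        simp [one_apply]

theorem det_innerMatrix_eq_one_iff (he : Orthonormal ℝ e) (hJ : ∀ x, J (J x) = -x) :
    (J.innerMatrix e).det = 1 ↔ ∀ v ∈ span ℝ (range e), J v ∈ span ℝ (range e) := by
  refine ⟨fun hdet v hv => ?_, fun h => det_eq_one_of_mul_self_eq_neg_one
    (J.innerMatrix_mul_self_eq_neg_one he hJ fun j => h _ (subset_span (mem_range_self j)))⟩
  have hinv : span ℝ (range e) ≤ (span ℝ (range e)).comap J.toLinearMap :=
    span_le.mpr <| range_subset_iff.mpr (J.apply_mem_span_of_det_innerMatrix_eq_one he hdet)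
  exact hinv hv

end LinearIsometry

end InnerMatrix

def Complex.mulIₗᵢ (E : Type*) [NormedAddCommGroup E] [InnerProductSpace ℂ E] :
    letI := InnerProductSpace.complexToReal (G := E)
    E →ₗᵢ[ℝ] E where
  toFun v := I • v
  map_add' := smul_add I
  map_smul' r v := smul_comm I r v
  norm_map' v := by simp [norm_smul]

theorem rinner_eq_re_inner {n : ℕ} (u v : EuclideanSpace ℂ (Fin n)) :
    rinner u v = RCLike.re ⟪u, v⟫_ℂ := by
  simp [rinner, PiLp.inner_apply, mul_comm]

theorem wirtinger_inequality_general {n k : ℕ}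
    (e : Fin (2 * k) → EuclideanSpace ℂ (Fin n))
    (horth : ∀ j l, rinner (e j) (e l) = if j = l then 1 else 0)
    (A : Matrix (Fin (2 * k)) (Fin (2 * k)) ℝ)
    (hA : ∀ j l, A j l = kahlerForm (e j) (e l)) :
    A.det ≤ 1 ∧
      (A.det = 1 ↔
        ∀ v ∈ Submodule.span ℝ (Set.range e),
          Complex.I • v ∈ Submodule.span ℝ (Set.range e)) := by
  let := InnerProductSpace.complexToReal (G := EuclideanSpace ℂ (Fin n))
  have he : Orthonormal ℝ e := orthonormal_iff_ite.mpr fun j l => by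
    rw [real_inner_eq_re_inner ℂ, ← rinner_eq_re_inner, horth]
  obtain rfl : A = (Complex.mulIₗᵢ _).innerMatrix e :=
    Matrix.ext fun j l => by rw [hA, kahlerForm, rinner_eq_re_inner]; rfl
  exact ⟨(Complex.mulIₗᵢ _).det_innerMatrix_le_one he,
    (Complex.mulIₗᵢ _).det_innerMatrix_eq_one_iff he fun x => by simp [Complex.mulIₗᵢ, smul_smul]⟩

/-- **Wirtinger's inequality.** If `e₁, …, e_{2k}` are vectors in `ℂⁿ` that are
orthonormal for the real inner product, then the real `2k × 2k` matrix
`A_{jl} = ω(e_j, e_l)` satisfies `det A ≤ 1`, with equality iff the real span of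
the `e_j` is closed under multiplication by `i`. -/
theorem wirtinger_inequality {n k : ℕ} (hn : 1 ≤ n) (hk : 1 ≤ k)
    (e : Fin (2 * k) → EuclideanSpace ℂ (Fin n))
    (horth : ∀ j l, rinner (e j) (e l) = if j = l then 1 else 0)
    (A : Matrix (Fin (2 * k)) (Fin (2 * k)) ℝ)
    (hA : ∀ j l, A j l = kahlerForm (e j) (e l)) :
    A.det ≤ 1 ∧
      (A.det = 1 ↔
        ∀ v ∈ Submodule.span ℝ (Set.range e),
          Complex.I • v ∈ Submodule.span ℝ (Set.range e)) :=
  wirtinger_inequality_general e horth A hA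
end

section
/- Let P be a real-linear subspace of ℂⁿ, and let u, v ∈ P be orthonormal vectors (for the real inner product) at which the quantity ⟪i•u', v'⟫ attains its maximum over all orthonormal pairs u', v' ∈ P. Then every unit vector w ∈ P orthogonal to both u and v satisfies ⟪i•u, w⟫ = 0 and ⟪i•v, w⟫ = 0. -/
open Complex Finset
lemma rinner_smul_left {n : ℕ} (c : ℝ) (x y : EuclideanSpace ℂ (Fin n)) :
    rinner (c • x) y = c * rinner x y := by
  unfold rinner
  have h : ∀ j, (c • x) j * starRingEnd ℂ (y j) = (c : ℂ) * (x j * starRingEnd ℂ (y j)) := by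
    intro j; simp [PiLp.smul_apply, Complex.real_smul, mul_assoc]
  rw [Finset.sum_congr rfl fun j _ => h j, ← Finset.mul_sum, Complex.re_ofReal_mul]

lemma rinner_add_left {n : ℕ} (x y z : EuclideanSpace ℂ (Fin n)) :
    rinner (x + y) z = rinner x z + rinner y z := by
  simp [rinner, add_mul, Finset.sum_add_distrib]

lemma rinner_symm {n : ℕ} (x y : EuclideanSpace ℂ (Fin n)) :
    rinner x y = rinner y x := by
  unfold rinner
  rw [← Complex.conj_re, map_sum]
  exact congrArg Complex.re (Finset.sum_congr rfl fun j _ => by simp [mul_comm])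

lemma rinner_I_skew {n : ℕ} (x y : EuclideanSpace ℂ (Fin n)) :
    rinner (Complex.I • x) y = - rinner (Complex.I • y) x := by
  unfold rinner
  rw [← Complex.conj_re (∑ j, (Complex.I • y) j * starRingEnd ℂ (x j)), map_sum, ← neg_re,
    ← Finset.sum_neg_distrib]
  refine congrArg Complex.re (Finset.sum_congr rfl fun j _ => ?_)
  simp [PiLp.smul_apply]; ring

lemma rinner_expand_left {n : ℕ} (c s : ℝ) (x y z : EuclideanSpace ℂ (Fin n)) :
    rinner (c • x + s • y) z = c * rinner x z + s * rinner y z := by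
  rw [rinner_add_left, rinner_smul_left, rinner_smul_left]

lemma rinner_expand_right {n : ℕ} (c s : ℝ) (x y z : EuclideanSpace ℂ (Fin n)) :
    rinner z (c • x + s • y) = c * rinner z x + s * rinner z y := by
  rw [rinner_symm, rinner_expand_left, rinner_symm x, rinner_symm y]

lemma coef_zero (a b : ℝ) (h : ∀ c s : ℝ, c ^ 2 + s ^ 2 = 1 → c * a + s * b ≤ a) : b = 0 := by
  have hnn : (0:ℝ) ≤ a ^ 2 + b ^ 2 := by positivity
  by_cases hab : a ^ 2 + b ^ 2 = 0
  · nlinarith [sq_nonneg a, sq_nonneg b]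
  · set r := Real.sqrt (a ^ 2 + b ^ 2) with hrdef
    have hr2 : r ^ 2 = a ^ 2 + b ^ 2 := Real.sq_sqrt hnn
    have h0 : 0 < r := Real.sqrt_pos.mpr (lt_of_le_of_ne hnn (Ne.symm hab))
    have hcs : (a / r) ^ 2 + (b / r) ^ 2 = 1 := by
      field_simp; linarith [hr2]
    have hle := h (a / r) (b / r) hcs
    have hra : (a / r) * a + (b / r) * b = r := by
      field_simp; nlinarith [hr2]
    have har : a ≤ r := by
      nlinarith [hr2, _root_.sq_abs a, le_abs_self a, abs_nonneg a, h0.le]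
    have : r = a := le_antisymm (by linarith [hra ▸ hle]) har
    nlinarith [hr2]

/-- If `(u, v)` is an orthonormal pair in a real subspace `P` of `ℂⁿ` maximising
`⟪i•u', v'⟫` among orthonormal pairs in `P`, then any unit vector `w ∈ P`
orthogonal to `u` and `v` satisfies `⟪i•u, w⟫ = 0` and `⟪i•v, w⟫ = 0`. -/
theorem maximal_pair_orthogonality {n : ℕ} (P : Submodule ℝ (EuclideanSpace ℂ (Fin n)))
    (u v : EuclideanSpace ℂ (Fin n)) (hu : u ∈ P) (hv : v ∈ P)
    (huu : rinner u u = 1) (hvv : rinner v v = 1) (huv : rinner u v = 0)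
    (hmax : ∀ u' v' : EuclideanSpace ℂ (Fin n), u' ∈ P → v' ∈ P →
      rinner u' u' = 1 → rinner v' v' = 1 → rinner u' v' = 0 →
      rinner (Complex.I • u') v' ≤ rinner (Complex.I • u) v)
    (w : EuclideanSpace ℂ (Fin n)) (hw : w ∈ P) (hww : rinner w w = 1)
    (hwu : rinner w u = 0) (hwv : rinner w v = 0) :
    rinner (Complex.I • u) w = 0 ∧ rinner (Complex.I • v) w = 0 := by
  have huw : rinner u w = 0 := (rinner_symm u w).trans hwu
  have hvw : rinner v w = 0 := (rinner_symm v w).trans hwv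
  constructor
  · -- perturb v by w
    apply coef_zero (rinner (Complex.I • u) v)
    intro c s hcs
    have hv' : c • v + s • w ∈ P := P.add_mem (P.smul_mem c hv) (P.smul_mem s hw)
    have h1 : rinner (c • v + s • w) (c • v + s • w) = 1 := by
      rw [rinner_expand_left, rinner_expand_right, rinner_expand_right, hvv, hww, hwv, hvw]
      nlinarith [hcs]
    have h2 : rinner u (c • v + s • w) = 0 := by
      rw [rinner_expand_right, huv, huw]; ring
    have := hmax u (c • v + s • w) hu hv' huu h1 h2
    rwa [rinner_expand_right] at this
  · -- perturb u by w
    have key : rinner (Complex.I • w) v = 0 := by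
      apply coef_zero (rinner (Complex.I • u) v)
      intro c s hcs
      have hu' : c • u + s • w ∈ P := P.add_mem (P.smul_mem c hu) (P.smul_mem s hw)
      have h1 : rinner (c • u + s • w) (c • u + s • w) = 1 := by
        rw [rinner_expand_left, rinner_expand_right, rinner_expand_right, huu, hww, hwu, huw]
        nlinarith [hcs]
      have h2 : rinner (c • u + s • w) v = 0 := by
        rw [rinner_expand_left, huv, hwv]; ring
      have := hmax (c • u + s • w) v hu' hv h1 hvv h2
      have hsmul : Complex.I • (c • u + s • w) = c • (Complex.I • u) + s • (Complex.I • w) := by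
        rw [smul_add, smul_comm Complex.I c, smul_comm Complex.I s]
      rwa [hsmul, rinner_expand_left] at this
    rw [rinner_I_skew, key, neg_zero]
end

section
/- Characterising angles: let n ≥ 1 and let P, Q be n-dimensional linear subspaces of ℝ^{2n}. Then there exists an orthonormal basis e₁, …, e_{2n} of ℝ^{2n} and angles θ₁, …, θₙ with 0 ≤ θ₁ ≤ … ≤ θ_{n−1} ≤ π/2 and θ_{n−1} ≤ θₙ ≤ π − θ_{n−1}, such that P = span{e₁, …, eₙ} and Q = span{cos θ₁ · e₁ + sin θ₁ · e_{n+1}, …, cos θₙ · eₙ + sin θₙ · e_{2n}}. -/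
open Real Module
open scoped InnerProductSpace

/-! The orthogonal projection onto `Q`, restricted to `P`, has a singular value decomposition
`eᵢ ↦ σᵢ fᵢ` with orthonormal bases `eᵢ` of `P` and `fᵢ` of `Q`; since `fᵢ ∈ Q`, this says
`⟪eᵢ, fⱼ⟫ = δᵢⱼ σᵢ`, and `σᵢ ∈ [0, 1]` decreases, so `σᵢ = cos θᵢ` with `θᵢ ∈ [0, π/2]`
increasing. The vectors `(fᵢ - cos θᵢ • eᵢ) / sin θᵢ` are then orthonormal and orthogonal to `P`,
so together with the `eᵢ` they extend to an orthonormal basis of `ℝ^{2n}` in which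
`fᵢ = cos θᵢ • eᵢ + sin θᵢ • e_{n+i}`. -/

namespace LinearMap

variable {𝕜 E F : Type*} [RCLike 𝕜]
  [NormedAddCommGroup E] [InnerProductSpace 𝕜 E] [FiniteDimensional 𝕜 E]
  [NormedAddCommGroup F] [InnerProductSpace 𝕜 F] [FiniteDimensional 𝕜 F]

theorem inner_apply_eigenvectorBasis_adjoint_comp_self (T : E →ₗ[𝕜] F) {n : ℕ}
    (hn : finrank 𝕜 E = n) (i j : Fin n) :
    ⟪T (T.isSymmetric_adjoint_comp_self.eigenvectorBasis hn i),
      T (T.isSymmetric_adjoint_comp_self.eigenvectorBasis hn j)⟫_𝕜 =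
      if i = j then ((T.singularValues i ^ 2 : ℝ) : 𝕜) else 0 := by
  rw [← adjoint_inner_right, ← comp_apply, T.isSymmetric_adjoint_comp_self.apply_eigenvectorBasis,
    inner_smul_right, orthonormal_iff_ite.mp (OrthonormalBasis.orthonormal _),
    T.sq_singularValues_fin hn]
  split_ifs with h <;> simp [h]

theorem exists_orthonormalBasis_apply_eq_singularValues_smul (T : E →ₗ[𝕜] F) {n : ℕ}
    (hE : finrank 𝕜 E = n) (hF : finrank 𝕜 F = n) :
    ∃ (e : OrthonormalBasis (Fin n) 𝕜 E) (f : OrthonormalBasis (Fin n) 𝕜 F),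
      ∀ i, T (e i) = (T.singularValues i : 𝕜) • f i := by
  have hTe := T.inner_apply_eigenvectorBasis_adjoint_comp_self hE
  set e := T.isSymmetric_adjoint_comp_self.eigenvectorBasis hE
  let v : Fin n → F := fun i => ((T.singularValues i : 𝕜)⁻¹) • T (e i)
  have hv : Orthonormal 𝕜 ({i : Fin n | T.singularValues i ≠ 0}.domRestrict v) := by
    rw [orthonormal_iff_ite]
    rintro ⟨i, hi⟩ ⟨j, hj⟩
    simp only [Set.domRestrict_apply, v, inner_smul_left, inner_smul_right, hTe, Subtype.mk.injEq]
    split_ifs with h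
    · subst h
      have : (T.singularValues i : 𝕜) ≠ 0 := by exact_mod_cast hi
      simp only [map_inv₀, RCLike.conj_ofReal]
      push_cast
      field_simp
    · simp
  obtain ⟨f, hf⟩ := hv.exists_orthonormalBasis_extension_of_card_eq (by simpa using hF)
  refine ⟨e, f, fun i => ?_⟩
  by_cases hi : T.singularValues i = 0
  · have : T (e i) = 0 := by
      rw [← inner_self_eq_zero (𝕜 := 𝕜), hTe, if_pos rfl, hi]
      simp
    simp [this, hi]
  · rw [hf i hi]
    simp [v, smul_smul, hi]

end LinearMap

section

variable {𝕜 E : Type*} [RCLike 𝕜] [NormedAddCommGroup E] [InnerProductSpace 𝕜 E]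

theorem OrthonormalBasis.span_range_coe {ι : Type*} [Fintype ι] {K : Submodule 𝕜 E}
    (b : OrthonormalBasis ι 𝕜 K) : Submodule.span 𝕜 (Set.range fun i => (b i : E)) = K := by
  rw [Set.range_comp' Subtype.val b, ← K.coe_subtype, Submodule.span_image, ← b.coe_toBasis,
    b.toBasis.span_eq, Submodule.map_subtype_top]

theorem OrthonormalBasis.orthonormal_coe {ι : Type*} [Fintype ι] {K : Submodule 𝕜 E}
    (b : OrthonormalBasis ι 𝕜 K) : Orthonormal 𝕜 fun i => (b i : E) :=
  b.orthonormal.comp_linearIsometry K.subtypeₗᵢ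

end

variable {E : Type*} [NormedAddCommGroup E] [InnerProductSpace ℝ E]

theorem Submodule.exists_principal_angles (K L : Submodule ℝ E) [FiniteDimensional ℝ K]
    [FiniteDimensional ℝ L] {n : ℕ} (hK : finrank ℝ K = n) (hL : finrank ℝ L = n) :
    ∃ (e : OrthonormalBasis (Fin n) ℝ K) (f : OrthonormalBasis (Fin n) ℝ L) (θ : Fin n → ℝ),
      Monotone θ ∧ (∀ i, θ i ∈ Set.Icc 0 (π / 2)) ∧
      ∀ i j, ⟪(e i : E), (f j : E)⟫_ℝ = if i = j then cos (θ i) else 0 := by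
  set T : K →ₗ[ℝ] L := L.orthogonalProjectionOnto.toLinearMap ∘ₗ K.subtype
  obtain ⟨e, f, hTef⟩ := T.exists_orthonormalBasis_apply_eq_singularValues_smul hK hL
  set σ : Fin n → ℝ := fun i => T.singularValues i
  have hef : ∀ i j, ⟪(e i : E), (f j : E)⟫_ℝ = if i = j then σ i else 0 := by
    intro i j
    rw [← L.inner_orthogonalProjectionOnto_eq_of_mem_right]
    change ⟪T (e i), f j⟫_ℝ = _
    rw [hTef, real_inner_smul_left, orthonormal_iff_ite.mp f.orthonormal]
    simp [σ]
  have hσ_le_one : ∀ i, σ i ≤ 1 := fun i => by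
    simpa [hef, Submodule.norm_coe, e.orthonormal.1 i, f.orthonormal.1 i] using
      real_inner_le_norm (e i : E) (f i : E)
  refine ⟨e, f, fun i => arccos (σ i),
    fun i j hij => antitone_arccos (T.singularValues_antitone hij),
    fun i => ⟨arccos_nonneg _, arccos_le_pi_div_two.mpr (T.singularValues_nonneg _)⟩, fun i j => ?_⟩
  rw [hef, cos_arccos (by linarith [T.singularValues_nonneg i]) (hσ_le_one i)]

theorem Orthonormal.exists_orthonormalBasis_sum_cos_smul_add_sin_smul [FiniteDimensional ℝ E]
    {ι : Type*} [Fintype ι] [DecidableEq ι]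
    (hE : finrank ℝ E = 2 * Fintype.card ι) {e f : ι → E} (he : Orthonormal ℝ e)
    (hf : Orthonormal ℝ f) (θ : ι → ℝ)
    (hef : ∀ i j, ⟪e i, f j⟫_ℝ = if i = j then cos (θ i) else 0) :
    ∃ b : OrthonormalBasis (ι ⊕ ι) ℝ E,
      ∀ i, b (.inl i) = e i ∧ f i = cos (θ i) • b (.inl i) + sin (θ i) • b (.inr i) := by
  set u : ι → E := fun i => f i - cos (θ i) • e i with hu
  have heu : ∀ i j, ⟪e i, u j⟫_ℝ = 0 := by
    intro i j
    simp only [hu, inner_sub_right, real_inner_smul_right, hef, orthonormal_iff_ite.mp he]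
    split_ifs <;> simp_all
  have huu : ∀ i j, ⟪u i, u j⟫_ℝ = if i = j then sin (θ i) ^ 2 else 0 := by
    intro i j
    rw [hu, inner_sub_left, real_inner_smul_left, heu, ← hu, inner_sub_right, real_inner_smul_right,
      orthonormal_iff_ite.mp hf, real_inner_comm, hef]
    rcases eq_or_ne i j with rfl | h
    · simp only [if_true, sin_sq]
      ring
    · simp [h, h.symm]
  -- where `sin θᵢ = 0` we have `fᵢ = cos θᵢ • eᵢ`, and `b (.inr i)` may be any unit vector
  let s : Set (ι ⊕ ι) := {k | k.elim (fun _ => True) (fun i => sin (θ i) ≠ 0)}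
  let v : ι ⊕ ι → E := Sum.elim e fun i => (sin (θ i))⁻¹ • u i
  have hv : Orthonormal ℝ (s.domRestrict v) := by
    rw [orthonormal_iff_ite]
    rintro ⟨i | i, hi⟩ ⟨j | j, hj⟩
    · simp [v, orthonormal_iff_ite.mp he]
    · simp [v, real_inner_smul_right, heu]
    · simp [v, real_inner_comm (e _), real_inner_smul_right, heu]
    · simp only [Set.domRestrict_apply, v, Sum.elim_inr, real_inner_smul_left,
        real_inner_smul_right, huu, Subtype.mk.injEq, Sum.inr.injEq]
      split_ifs with h
      · subst h
        have : sin (θ i) ≠ 0 := hi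
        field_simp
      · simp
  obtain ⟨b, hb⟩ := hv.exists_orthonormalBasis_extension_of_card_eq (by simpa [two_mul] using hE)
  refine ⟨b, fun i => ⟨hb (.inl i) trivial, ?_⟩⟩
  rw [hb (.inl i) trivial, ← sub_eq_iff_eq_add']
  change u i = _
  by_cases hi : sin (θ i) = 0
  · rw [hi, zero_smul, ← inner_self_eq_zero (𝕜 := ℝ), huu, if_pos rfl, hi]
    ring
  · rw [hb (.inr i) hi]
    simp [v, smul_smul, hi]

/-- **Characterising angles of a pair of `n`-planes in `ℝ^{2n}`.**
Given `n`-dimensional subspaces `P, Q` of `ℝ^{2n}`, there is an orthonormal basis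
`e₁, …, e_{2n}` of `ℝ^{2n}` and angles `θ₁, …, θₙ` with
`0 ≤ θ₁ ≤ ⋯ ≤ θ_{n-1} ≤ π/2` and `θ_{n-1} ≤ θₙ ≤ π - θ_{n-1}` such that
`P = span{e₁, …, eₙ}` and `Q = span{cos θⱼ • eⱼ + sin θⱼ • e_{n+j}}`. -/
theorem characterising_angles {n : ℕ} (hn : 1 ≤ n)
    (P Q : Submodule ℝ (EuclideanSpace ℝ (Fin (2 * n))))
    (hP : Module.finrank ℝ P = n) (hQ : Module.finrank ℝ Q = n) :
    ∃ (e : Fin (2 * n) → EuclideanSpace ℝ (Fin (2 * n))) (θ : Fin n → ℝ),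
      Orthonormal ℝ e ∧
      Submodule.span ℝ (Set.range e) = ⊤ ∧
      (∀ j : Fin n, 0 ≤ θ j ∧ θ j ≤ π) ∧
      (∀ i j : Fin n, i ≤ j → (j : ℕ) + 2 ≤ n → θ i ≤ θ j) ∧
      (∀ j : Fin n, (j : ℕ) + 2 ≤ n →
        θ j ≤ π / 2 ∧ θ j ≤ θ ⟨n - 1, by omega⟩ ∧ θ ⟨n - 1, by omega⟩ ≤ π - θ j) ∧
      P = Submodule.span ℝ
        (Set.range (fun j : Fin n => e ⟨(j : ℕ), by have := j.isLt; omega⟩)) ∧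
      Q = Submodule.span ℝ
        (Set.range (fun j : Fin n =>
          Real.cos (θ j) • e ⟨(j : ℕ), by have := j.isLt; omega⟩ +
          Real.sin (θ j) • e ⟨n + (j : ℕ), by have := j.isLt; omega⟩)) := by
  obtain ⟨e, f, θ, hθ_mono, hθ_mem, hef⟩ := P.exists_principal_angles Q hP hQ
  obtain ⟨b, hb⟩ := e.orthonormal_coe.exists_orthonormalBasis_sum_cos_smul_add_sin_smul
    (by simp) f.orthonormal_coe θ hef
  set b' := b.reindex (finSumFinEquiv.trans (finCongr (two_mul n).symm))
  have hb'_inl : ∀ (j : Fin n) (hj : (j : ℕ) < 2 * n), b' ⟨j, hj⟩ = b (.inl j) := fun j hj => by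
    rw [OrthonormalBasis.reindex_apply]
    exact congrArg b (finSumFinEquiv_symm_apply_castAdd j)
  have hb'_inr : ∀ (j : Fin n) (hj : n + (j : ℕ) < 2 * n), b' ⟨n + j, hj⟩ = b (.inr j) :=
    fun j hj => by
      rw [OrthonormalBasis.reindex_apply]
      exact congrArg b (finSumFinEquiv_symm_apply_natAdd j)
  have hθ_half : ∀ j, θ j ≤ π / 2 := fun j => (hθ_mem j).2
  refine ⟨b', θ, b'.orthonormal, by simpa using b'.toBasis.span_eq,
    fun j => ⟨(hθ_mem j).1, (hθ_half j).trans (by linarith [pi_pos])⟩,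
    fun i j hij _ => hθ_mono hij,
    fun j hj => ⟨hθ_half j, hθ_mono (Fin.le_def.mpr (by dsimp only; omega)),
      by linarith [hθ_half j, hθ_half ⟨n - 1, by omega⟩]⟩, ?_, ?_⟩
  · refine e.span_range_coe.symm.trans ?_
    simp_rw [hb'_inl, fun j => (hb j).1]
  · refine f.span_range_coe.symm.trans ?_
    simp_rw [hb'_inl, hb'_inr, fun j => (hb j).2]
end

section
/- The standard G₂ 3-form is a calibration on ℝ⁷: for any orthonormal vectors u, v, w in ℝ⁷, one has |φ(u, v, w)| ≤ 1. -/
noncomputable section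

/-- The alternating 3-form `dx_{ijk}` on `ℝ⁷` (with 0-indexed coordinates):
`(u,v,w) ↦ det` of the 3×3 matrix of their `(i,j,k)`-coordinates. -/
def dx3 (i j k : Fin 7) (u v w : EuclideanSpace ℝ (Fin 7)) : ℝ :=
  Matrix.det !![u i, v i, w i; u j, v j, w j; u k, v k, w k]

/-- The standard G₂ 3-form on `ℝ⁷`:
`φ = dx₁₂₃ + dx₁₄₅ + dx₁₆₇ + dx₂₄₆ − dx₂₅₇ − dx₃₄₇ − dx₃₅₆` (in 1-indexed notation). -/
def g2Form (u v w : EuclideanSpace ℝ (Fin 7)) : ℝ :=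
  dx3 0 1 2 u v w + dx3 0 3 4 u v w + dx3 0 5 6 u v w + dx3 1 3 5 u v w
    - dx3 1 4 6 u v w - dx3 2 3 6 u v w - dx3 2 4 5 u v w

/-!
The G₂ form is `φ(u, v, w) = ⟪u × v, w⟫` for the octonionic cross product `×` on `ℝ⁷`, and this
cross product satisfies Lagrange's identity `‖u × v‖² = ‖u‖²‖v‖² - ⟪u, v⟫²`. Cauchy–Schwarz then
gives `|φ(u, v, w)| ≤ ‖u‖‖v‖‖w‖`.
-/

open scoped RealInnerProductSpace

/-- Coordinate `k` is `g2Form u v (e k)`, with `e k` the `k`-th standard basis vector. -/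
def g2Cross (u v : EuclideanSpace ℝ (Fin 7)) : EuclideanSpace ℝ (Fin 7) :=
  !₂[(u 1 * v 2 - u 2 * v 1) + (u 3 * v 4 - u 4 * v 3) + (u 5 * v 6 - u 6 * v 5),
    -(u 0 * v 2 - u 2 * v 0) + (u 3 * v 5 - u 5 * v 3) - (u 4 * v 6 - u 6 * v 4),
    (u 0 * v 1 - u 1 * v 0) - (u 3 * v 6 - u 6 * v 3) - (u 4 * v 5 - u 5 * v 4),
    -(u 0 * v 4 - u 4 * v 0) - (u 1 * v 5 - u 5 * v 1) + (u 2 * v 6 - u 6 * v 2),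
    (u 0 * v 3 - u 3 * v 0) + (u 1 * v 6 - u 6 * v 1) + (u 2 * v 5 - u 5 * v 2),
    -(u 0 * v 6 - u 6 * v 0) + (u 1 * v 3 - u 3 * v 1) - (u 2 * v 4 - u 4 * v 2),
    (u 0 * v 5 - u 5 * v 0) - (u 1 * v 4 - u 4 * v 1) - (u 2 * v 3 - u 3 * v 2)]

theorem g2Form_eq_inner_g2Cross (u v w : EuclideanSpace ℝ (Fin 7)) :
    g2Form u v w = ⟪g2Cross u v, w⟫ := by
  simp only [g2Form, dx3, Matrix.det_fin_three, g2Cross, PiLp.inner_apply, Fin.sum_univ_seven,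
    Matrix.of_apply, Matrix.cons_val', Matrix.cons_val_zero, Matrix.cons_val_fin_one,
    Matrix.cons_val_one, Matrix.cons_val, RCLike.inner_apply, Real.ringHom_apply]
  ring

theorem norm_g2Cross_sq (u v : EuclideanSpace ℝ (Fin 7)) :
    ‖g2Cross u v‖ ^ 2 = ‖u‖ ^ 2 * ‖v‖ ^ 2 - ⟪u, v⟫ ^ 2 := by
  simp only [EuclideanSpace.real_norm_sq_eq, g2Cross, PiLp.inner_apply, Fin.sum_univ_seven,
    Matrix.cons_val_zero, Matrix.cons_val_one, Matrix.cons_val, RCLike.inner_apply,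
    Real.ringHom_apply]
  ring

theorem norm_g2Cross_le (u v : EuclideanSpace ℝ (Fin 7)) : ‖g2Cross u v‖ ≤ ‖u‖ * ‖v‖ := by
  refine le_of_pow_le_pow_left₀ two_ne_zero (by positivity) ?_
  rw [norm_g2Cross_sq, mul_pow]
  linarith [sq_nonneg ⟪u, v⟫]

theorem abs_g2Form_le (u v w : EuclideanSpace ℝ (Fin 7)) :
    |g2Form u v w| ≤ ‖u‖ * ‖v‖ * ‖w‖ :=
  calc |g2Form u v w| = |⟪g2Cross u v, w⟫| := by rw [g2Form_eq_inner_g2Cross]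
    _ ≤ ‖g2Cross u v‖ * ‖w‖ := abs_real_inner_le_norm _ _
    _ ≤ ‖u‖ * ‖v‖ * ‖w‖ := by gcongr; exact norm_g2Cross_le u v

/-- **The G₂ 3-form is a calibration on `ℝ⁷`.** For any orthonormal vectors
`u, v, w` in `ℝ⁷`, `|φ(u,v,w)| ≤ 1`. -/
theorem g2Form_is_calibration (u v w : EuclideanSpace ℝ (Fin 7))
    (h : Orthonormal ℝ ![u, v, w]) :
    |g2Form u v w| ≤ 1 := by
  have hu : ‖u‖ = 1 := by simpa using h.1 0
  have hv : ‖v‖ = 1 := by simpa using h.1 1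
  have hw : ‖w‖ = 1 := by simpa using h.1 2
  simpa [hu, hv, hw] using abs_g2Form_le u v w
end
end

section
/- Conserved quantities for the Lawlor-neck ODE: let n ≥ 1 and let z₁, …, zₙ : ℝ → ℂ be differentiable functions satisfying conj(z_j(s)) · z_j′(s) = i · ∏_{k=1}^n conj(z_k(s)) for all j and all s ∈ ℝ. Then for all s ∈ ℝ: (i) the quantity |z_j(s)|² − |z_j(0)|² is the same for all j; and (ii) Re(∏_{j=1}^n z_j(s)) = Re(∏_{j=1}^n z_j(0)). -/
/-!
Along the flow, `d/ds |z_j|² = 2 Re (conj z_j · z_j') = 2 Re (i ∏ conj z_k)` does not depend on `j`.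
For `P = ∏ z_j` one finds `conj P · P' = i · conj P · ∑_j ∏_{k ≠ j} |z_k|²`, so wherever `P ≠ 0`
the derivative `P'` is purely imaginary; hence `Re P · (Re P)' = 0` everywhere, which forces
`Re P` to be constant.
-/

open Complex ComplexConjugate Finset

theorem HasDerivAt.normSq {f : ℝ → ℂ} {f' : ℂ} {x : ℝ} (hf : HasDerivAt f f' x) :
    HasDerivAt (fun t => normSq (f t)) (2 * (conj (f x) * f').re) x := by
  convert hf.norm_sq using 1
  · exact funext fun t => normSq_eq_norm_sq (f t)
  · rw [Complex.inner, mul_comm f']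

theorem sub_eq_sub_of_hasDerivAt {f g f' : ℝ → ℝ} (hf : ∀ x, HasDerivAt f (f' x) x)
    (hg : ∀ x, HasDerivAt g (f' x) x) (x y : ℝ) : f x - f y = g x - g y := by
  have hfg : ∀ t, HasDerivAt (fun t => f t - g t) 0 t := fun t => by
    simpa using (hf t).fun_sub (hg t)
  have := is_const_of_deriv_eq_zero (fun t => (hfg t).differentiableAt) (fun t => (hfg t).deriv) x y
  linarith

/-- `(f²)' = 0`, so either `f ≡ 0`, or `f` never vanishes and then `f' ≡ 0`. -/
theorem eq_of_hasDerivAt_of_mul_eq_zero {f f' : ℝ → ℝ} (hf : ∀ x, HasDerivAt f (f' x) x)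
    (hff' : ∀ x, f x * f' x = 0) (x y : ℝ) : f x = f y := by
  have hsq' : ∀ t, HasDerivAt (fun t => f t ^ 2) 0 t := fun t => by
    simpa [mul_assoc, hff' t] using (hf t).fun_pow 2
  have hsq : ∀ t, f t ^ 2 = f y ^ 2 := fun t =>
    is_const_of_deriv_eq_zero (fun t => (hsq' t).differentiableAt) (fun t => (hsq' t).deriv) t y
  by_cases hy : f y = 0
  · simpa [hy] using hsq x
  · have hne : ∀ t, f t ≠ 0 := fun t ht => hy (by simpa [ht, eq_comm] using hsq t)
    have hf'0 : ∀ t, HasDerivAt f 0 t := fun t => by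
      simpa [(mul_eq_zero.mp (hff' t)).resolve_left (hne t)] using hf t
    exact is_const_of_deriv_eq_zero (fun t => (hf'0 t).differentiableAt) (fun t => (hf'0 t).deriv) x y

theorem conj_prod_mul_sum_prod_erase_mul {ι : Type*} [Fintype ι] [DecidableEq ι] (z w : ι → ℂ) :
    conj (∏ i, z i) * ∑ j, (∏ k ∈ univ.erase j, z k) * w j =
      ∑ j, (∏ k ∈ univ.erase j, (normSq (z k) : ℂ)) * (conj (z j) * w j) := by
  rw [mul_sum]
  refine sum_congr rfl fun j _ => ?_
  rw [map_prod, ← mul_prod_erase univ (fun k => conj (z k)) (mem_univ j)]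
  simp_rw [← Complex.mul_conj, prod_mul_distrib]
  ring

theorem re_mul_re_eq_zero_of_conj_mul_eq {p q : ℂ} {r : ℝ} (h : conj p * q = I * conj p * r) :
    p.re * q.re = 0 := by
  rcases eq_or_ne p 0 with rfl | hp
  · simp
  · have hq : q = I * r := mul_left_cancel₀ ((map_ne_zero _).mpr hp) (by rw [h]; ring)
    simp [hq]

theorem lawlor_ode_conserved_general {n : ℕ} (z z' : Fin n → ℝ → ℂ)
    (hderiv : ∀ (j : Fin n) (s : ℝ), HasDerivAt (z j) (z' j s) s)
    (hode : ∀ (j : Fin n) (s : ℝ),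
      starRingEnd ℂ (z j s) * z' j s = Complex.I * ∏ k, starRingEnd ℂ (z k s)) :
    (∀ (j l : Fin n) (s : ℝ),
      Complex.normSq (z j s) - Complex.normSq (z j 0) =
        Complex.normSq (z l s) - Complex.normSq (z l 0)) ∧
    (∀ s : ℝ, (∏ j, z j s).re = (∏ j, z j 0).re) := by
  have hnormSq : ∀ j s, HasDerivAt (fun t => normSq (z j t)) (2 * (I * ∏ k, conj (z k s)).re) s :=
    fun j s => by simpa only [hode] using (hderiv j s).normSq
  refine ⟨fun j l s => sub_eq_sub_of_hasDerivAt (hnormSq j) (hnormSq l) s 0, fun s => ?_⟩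
  have hprod : ∀ s, HasDerivAt (fun t => (∏ j, z j t).re)
      (∑ j, (∏ k ∈ univ.erase j, z k s) * z' j s).re s := fun s =>
    reCLM.hasFDerivAt.comp_hasDerivAt s (HasDerivAt.fun_finsetProd fun j _ => hderiv j s)
  refine eq_of_hasDerivAt_of_mul_eq_zero hprod (fun t => re_mul_re_eq_zero_of_conj_mul_eq
    (r := ∑ j, ∏ k ∈ univ.erase j, normSq (z k t)) ?_) s 0
  rw [conj_prod_mul_sum_prod_erase_mul]
  simp only [hode, map_prod]
  push_cast
  rw [← sum_mul]
  ring

/-- **Conserved quantities for the Lawlor-neck ODE.** If `z₁, …, zₙ : ℝ → ℂ` satisfy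
`conj(z_j) · z_j′ = i · ∏ₖ conj(z_k)`, then `|z_j(s)|² − |z_j(0)|²` is independent
of `j`, and `Re ∏ⱼ z_j(s)` is constant in `s`. -/
theorem lawlor_ode_conserved {n : ℕ} (hn : 1 ≤ n) (z z' : Fin n → ℝ → ℂ)
    (hderiv : ∀ (j : Fin n) (s : ℝ), HasDerivAt (z j) (z' j s) s)
    (hode : ∀ (j : Fin n) (s : ℝ),
      starRingEnd ℂ (z j s) * z' j s = Complex.I * ∏ k, starRingEnd ℂ (z k s)) :
    (∀ (j l : Fin n) (s : ℝ),
      Complex.normSq (z j s) - Complex.normSq (z j 0) =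
        Complex.normSq (z l s) - Complex.normSq (z l 0)) ∧
    (∀ s : ℝ, (∏ j, z j s).re = (∏ j, z j 0).re) :=
  lawlor_ode_conserved_general z z' hderiv hode
end

section
/- Asymptotic angle of the Lawlor neck: let n ≥ 1 and let a₁, …, aₙ be positive real numbers. Then Σ_{j=1}^n ∫_0^∞ a_j / ((1 + a_j t²) · √((∏_{k=1}^n (1 + a_k t²) − 1)/t²)) dt = π/2. -/
open MeasureTheory Real Finset

/-! With `P t = ∏ₖ (1 + aₖ t²)`, the function `F t = arctan √(P t - 1)` is an antiderivative of
the summed integrand on `(0, ∞)`: `F' = P' / (2 P √(P - 1))`, and the logarithmic derivative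
`P' / P = Σⱼ 2 aⱼ t / (1 + aⱼ t²)` splits this into the `n` integrands. Since `F 0 = 0` and
`F t → π / 2`, the nonnegative sum is integrable with integral `π / 2`, and so is each summand. -/

open Filter Topology Set

theorem HasDerivAt.arctan_sqrt_sub_one {P : ℝ → ℝ} {P' t : ℝ} (hP : HasDerivAt P P' t)
    (h1 : 1 < P t) :
    HasDerivAt (fun x => Real.arctan √(P x - 1)) (P' / (2 * P t * √(P t - 1))) t := by
  have hpos : 0 < P t - 1 := sub_pos.2 h1
  convert ((hP.sub_const 1).sqrt hpos.ne').arctan using 1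
  rw [sq_sqrt hpos.le]
  field_simp
  ring

theorem MeasureTheory.Integrable.of_finsetSum_of_nonneg {α ι : Type*} [MeasurableSpace α]
    {μ : Measure α} {s : Finset ι} {f : ι → α → ℝ} {j : ι} (hj : j ∈ s)
    (hsum : Integrable (fun x => ∑ i ∈ s, f i x) μ) (hf : AEStronglyMeasurable (f j) μ)
    (hnonneg : ∀ᵐ x ∂μ, ∀ i ∈ s, 0 ≤ f i x) : Integrable (f j) μ := by
  refine hsum.mono' hf ?_
  filter_upwards [hnonneg] with x hx
  rw [norm_of_nonneg (hx j hj)]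
  exact single_le_sum hx hj

section Lawlor

variable {ι : Type*} [Fintype ι] {a : ι → ℝ}

noncomputable def lawlorProduct (a : ι → ℝ) (t : ℝ) : ℝ := ∏ k, (1 + a k * t ^ 2)

noncomputable def lawlorAngle (a : ι → ℝ) (t : ℝ) : ℝ := arctan √(lawlorProduct a t - 1)

noncomputable def lawlorIntegrand (a : ι → ℝ) (j : ι) (t : ℝ) : ℝ :=
  a j / ((1 + a j * t ^ 2) * √((lawlorProduct a t - 1) / t ^ 2))

theorem one_le_one_add_mul_sq {c : ℝ} (hc : 0 ≤ c) (t : ℝ) : 1 ≤ 1 + c * t ^ 2 :=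
  le_add_of_nonneg_right (by positivity)

theorem one_add_mul_sq_le_lawlorProduct (ha : ∀ k, 0 ≤ a k) (j : ι) (t : ℝ) :
    1 + a j * t ^ 2 ≤ lawlorProduct a t := by
  classical
  rw [lawlorProduct, ← prod_erase_mul _ _ (mem_univ j)]
  exact le_mul_of_one_le_left (by linarith [one_le_one_add_mul_sq (ha j) t])
    (one_le_prod fun k _ => one_le_one_add_mul_sq (ha k) t)

theorem one_lt_lawlorProduct (ha : ∀ k, 0 ≤ a k) {j : ι} (hj : 0 < a j) {t : ℝ} (ht : t ≠ 0) :
    1 < lawlorProduct a t :=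
  (lt_add_of_pos_right 1 (by positivity)).trans_le (one_add_mul_sq_le_lawlorProduct ha j t)

theorem tendsto_lawlorProduct_atTop (ha : ∀ k, 0 ≤ a k) {j : ι} (hj : 0 < a j) :
    Tendsto (lawlorProduct a) atTop atTop :=
  tendsto_atTop_mono (one_add_mul_sq_le_lawlorProduct ha j)
    (tendsto_atTop_add_const_left _ 1 ((tendsto_pow_atTop two_ne_zero).const_mul_atTop hj))

theorem hasDerivAt_lawlorProduct (ha : ∀ k, 0 ≤ a k) (t : ℝ) :
    HasDerivAt (lawlorProduct a)
      (lawlorProduct a t * ∑ j, 2 * a j * t / (1 + a j * t ^ 2)) t := by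
  have hfac : ∀ j, HasDerivAt (fun x => 1 + a j * x ^ 2) (2 * a j * t) t := fun j => by
    simpa [mul_comm, mul_left_comm] using ((hasDerivAt_pow 2 t).const_mul (a j)).const_add 1
  have hne : ∀ j, 1 + a j * t ^ 2 ≠ 0 := fun j =>
    (zero_lt_one.trans_le (one_le_one_add_mul_sq (ha j) t)).ne'
  have hlog := logDeriv_prod (s := univ) (fun j _ => hne j) fun j _ => (hfac j).differentiableAt
  simp only [logDeriv_apply, (hfac _).deriv] at hlog
  have hP : DifferentiableAt ℝ (lawlorProduct a) t := by unfold lawlorProduct; fun_prop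
  refine hP.hasDerivAt.congr_deriv ?_
  rw [← hlog, lawlorProduct, mul_div_cancel₀ _ (prod_ne_zero_iff.2 fun j _ => hne j)]
  rfl

theorem lawlorAngle_zero : lawlorAngle a 0 = 0 := by
  simp [lawlorAngle, lawlorProduct]

theorem continuous_lawlorAngle : Continuous (lawlorAngle a) := by
  unfold lawlorAngle lawlorProduct; fun_prop

theorem tendsto_lawlorAngle_atTop (ha : ∀ k, 0 ≤ a k) {j : ι} (hj : 0 < a j) :
    Tendsto (lawlorAngle a) atTop (𝓝 (π / 2)) :=
  (tendsto_arctan_atTop.mono_right nhdsWithin_le_nhds).comp <|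
    tendsto_sqrt_atTop.comp <|
      tendsto_atTop_add_const_right _ (-1) (tendsto_lawlorProduct_atTop ha hj)

theorem hasDerivAt_lawlorAngle (ha : ∀ k, 0 ≤ a k) {i : ι} (hi : 0 < a i) {t : ℝ} (ht : 0 < t) :
    HasDerivAt (lawlorAngle a) (∑ j, lawlorIntegrand a j t) t := by
  have hP := one_lt_lawlorProduct ha hi ht.ne'
  refine (HasDerivAt.arctan_sqrt_sub_one (hasDerivAt_lawlorProduct ha t) hP).congr_deriv ?_
  have hs : 0 < √(lawlorProduct a t - 1) := sqrt_pos.2 (sub_pos.2 hP)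
  simp only [lawlorIntegrand, sqrt_div' _ (sq_nonneg t), sqrt_sq ht.le, mul_sum, sum_div]
  refine sum_congr rfl fun j _ => ?_
  have hfac := one_le_one_add_mul_sq (ha j) t
  field_simp

theorem lawlorIntegrand_nonneg (ha : ∀ k, 0 ≤ a k) (j : ι) (t : ℝ) : 0 ≤ lawlorIntegrand a j t :=
  div_nonneg (ha j) (mul_nonneg (by linarith [one_le_one_add_mul_sq (ha j) t]) (sqrt_nonneg _))

theorem measurable_lawlorIntegrand (j : ι) : Measurable (lawlorIntegrand a j) := by
  unfold lawlorIntegrand lawlorProduct; fun_prop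

end Lawlor

/-- **Asymptotic angle of the Lawlor neck.** For positive reals `a₁, …, aₙ`,
`Σⱼ ∫₀^∞ aⱼ / ((1 + aⱼt²)·√((∏ₖ(1 + aₖt²) − 1)/t²)) dt = π/2`, each integral
being finite. -/
theorem lawlor_angle_sum {n : ℕ} (hn : 1 ≤ n) (a : Fin n → ℝ) (ha : ∀ j, 0 < a j) :
    (∀ j : Fin n, IntegrableOn
      (fun t : ℝ => a j /
        ((1 + a j * t ^ 2) * Real.sqrt (((∏ k, (1 + a k * t ^ 2)) - 1) / t ^ 2)))
      (Set.Ioi 0)) ∧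
    (∑ j : Fin n, ∫ t in Set.Ioi (0 : ℝ),
        a j / ((1 + a j * t ^ 2) *
          Real.sqrt (((∏ k, (1 + a k * t ^ 2)) - 1) / t ^ 2))) = π / 2 := by
  have ha' : ∀ k, 0 ≤ a k := fun k => (ha k).le
  have ha₀ : 0 < a ⟨0, hn⟩ := ha _
  have hcont : ContinuousWithinAt (lawlorAngle a) (Ici 0) 0 :=
    continuous_lawlorAngle.continuousWithinAt
  have hderiv : ∀ t ∈ Ioi (0 : ℝ), HasDerivAt (lawlorAngle a) (∑ j, lawlorIntegrand a j t) t :=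
    fun t ht => hasDerivAt_lawlorAngle ha' ha₀ ht
  have hlim := tendsto_lawlorAngle_atTop ha' ha₀
  have hsum : IntegrableOn (fun t => ∑ j, lawlorIntegrand a j t) (Ioi 0) :=
    integrableOn_Ioi_deriv_of_nonneg hcont hderiv
      (fun t _ => sum_nonneg fun j _ => lawlorIntegrand_nonneg ha' j t) hlim
  have hint : ∀ j, IntegrableOn (lawlorIntegrand a j) (Ioi 0) := fun j =>
    Integrable.of_finsetSum_of_nonneg (mem_univ j) hsum
      (measurable_lawlorIntegrand j).aestronglyMeasurable
      (ae_of_all _ fun t i _ => lawlorIntegrand_nonneg ha' i t)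
  refine ⟨hint, ?_⟩
  change ∑ j, ∫ t in Ioi 0, lawlorIntegrand a j t = π / 2
  rw [← integral_finsetSum _ fun j _ => hint j,
    integral_Ioi_of_hasDerivAt_of_tendsto hcont hderiv hsum hlim, lawlorAngle_zero, sub_zero]
end
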